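/- arXiv:2105.13167 — 2 statements merged into one kernel-verified Lean document; each statement's English description precedes it below -/
import Mathlib

section
/- Let (Q,q,k) be a regular local ring, I1, I2 ⊆ q^2 q-primary ideals with R1 = Q/I1 and R2 = Q/I2 Gorenstein of socle degrees s1 ≤ s2, and suppose R = Q/(I1 ∩ I2) has type 2 and socle degree s. Let b = min{ i ≥ 1 : q^{i+1} ∩ I2 ⊆ I1 }. Then the rank of m^s (where m is the maximal ideal of R) equals 2 if and only if b = s, and in that case s1 = s. -/
open IsLocalRing

/-- A Noetherian local ring is regular if its maximal ideal is generated by a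
regular sequence. -/
def IsRegularLocal (Q : Type*) [CommRing Q] [IsLocalRing Q] : Prop :=
  ∃ L : List Q, RingTheory.Sequence.IsRegular Q L ∧
    Ideal.span {x | x ∈ L} = maximalIdeal Q

/-- `σ` is the socle degree of `Q/J`: `q^σ ⊄ J` and `q^{σ+1} ⊆ J`. -/
def SocDeg {Q : Type*} [CommRing Q] [IsLocalRing Q] (J : Ideal Q) (σ : ℕ) : Prop :=
  ¬ maximalIdeal Q ^ σ ≤ J ∧ maximalIdeal Q ^ (σ + 1) ≤ J

/-- `Q/J` has type 1 (is artinian Gorenstein). -/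
def HasTypeOne {Q : Type*} [CommRing Q] [IsLocalRing Q] (J : Ideal Q) : Prop :=
  ∃ x : Q, x ∉ J ∧ J.colon (maximalIdeal Q) = J ⊔ Ideal.span {x}

/-- `Q/J` has type 2. -/
def HasTypeTwo {Q : Type*} [CommRing Q] [IsLocalRing Q] (J : Ideal Q) : Prop :=
  ∃ x y : Q, J.colon (maximalIdeal Q) = J ⊔ Ideal.span {x, y} ∧
    ∀ a b : Q, a * x + b * y ∈ J → a ∈ maximalIdeal Q ∧ b ∈ maximalIdeal Q

/-! Write `q` for the maximal ideal and `I = I1 ∩ I2`. Socle degrees of an intersection are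
maxima, so `s = s2`; and `s ≥ 2`, since otherwise `I1 ⊆ q^2 ⊆ I ⊆ I2`, so `Q/I = Q/I1` would
be Gorenstein. As `q^{s+1} ⊆ I`, the ideal `q^s` lies in the socles of `Q/I`, `Q/I1` and `Q/I2`,
and in a Gorenstein quotient any socle element outside the ideal generates the socle.
If `q^s ∩ I2 ⊆ I1`, then reduction modulo `I2` is injective on `(q^s + I)/I`, which therefore
sits in the one-dimensional socle of `Q/I2`. Otherwise `f ∈ q^s ∩ I2 \ I1` and `g ∈ q^s \ I2`
are independent modulo `I`, and they span `q^s` modulo `I`: subtract a multiple of `g`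
(the socle generator of `Q/I2`) to land in `I2`, then a multiple of `f` (the socle generator of
`Q/I1`) to land in `I1`. Finally `b = s` says exactly that `q^s ∩ I2 ⊄ I1`, which fails when
`s1 < s`. -/

section

variable {Q : Type*} [CommRing Q] [IsLocalRing Q]

/-- The images of `f` and `g` in `Q/J` are linearly independent over the residue field. -/
def IndepModulo (J : Ideal Q) (f g : Q) : Prop :=
  ∀ a c : Q, a * f + c * g ∈ J → a ∈ maximalIdeal Q ∧ c ∈ maximalIdeal Q

theorem IndepModulo.left_notMem {J : Ideal Q} {f g : Q} (h : IndepModulo J f g) : f ∉ J :=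
  fun hf => notMem_maximalIdeal.2 isUnit_one (h 1 0 (by simpa using hf)).1

theorem mul_mem_of_mem_colon_maximalIdeal {J : Ideal Q} {x a : Q}
    (hx : x ∈ J.colon (maximalIdeal Q)) (ha : a ∈ maximalIdeal Q) : a * x ∈ J :=
  mul_comm x a ▸ Submodule.mem_colon.1 hx a ha

theorem pow_le_colon_maximalIdeal {J : Ideal Q} {n : ℕ} (h : maximalIdeal Q ^ (n + 1) ≤ J) :
    maximalIdeal Q ^ n ≤ J.colon (maximalIdeal Q) := fun _ hz =>
  Submodule.mem_colon.2 fun _ hp => h (pow_succ (maximalIdeal Q) n ▸ Ideal.mul_mem_mul hz hp)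

theorem colon_eq_sup_span_singleton_of_mem {J : Ideal Q} {x w : Q}
    (hx : J.colon (maximalIdeal Q) = J ⊔ Ideal.span {x})
    (hw : w ∈ J.colon (maximalIdeal Q)) (hwJ : w ∉ J) :
    J.colon (maximalIdeal Q) = J ⊔ Ideal.span {w} := by
  refine le_antisymm ?_ (sup_le Ideal.le_colon (Ideal.span_singleton_le_iff_mem _ |>.2 hw))
  obtain ⟨j, hj, t, ht, rfl⟩ := Submodule.mem_sup.1 (hx ▸ hw)
  obtain ⟨u, rfl⟩ := Ideal.mem_span_singleton'.1 ht
  have hxcol : x ∈ J.colon (maximalIdeal Q) :=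
    hx ▸ Ideal.mem_sup_right (Ideal.mem_span_singleton_self x)
  have hu : IsUnit u := notMem_maximalIdeal.1 fun hu =>
    hwJ (J.add_mem hj (mul_mem_of_mem_colon_maximalIdeal hxcol hu))
  have hux : u * x ∈ J ⊔ Ideal.span {j + u * x} := by
    simpa using Ideal.sub_mem _ (Ideal.mem_sup_right (Ideal.mem_span_singleton_self (j + u * x)))
      (Ideal.mem_sup_left hj)
  rw [hx]
  exact sup_le le_sup_left
    ((Ideal.span_singleton_le_iff_mem _).2 ((Ideal.unit_mul_mem_iff_mem _ hu).1 hux))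

theorem not_indepModulo_of_colon_eq {J : Ideal Q} {x f g : Q}
    (hx : J.colon (maximalIdeal Q) = J ⊔ Ideal.span {x})
    (hf : f ∈ J.colon (maximalIdeal Q)) (hg : g ∈ J.colon (maximalIdeal Q)) :
    ¬ IndepModulo J f g := by
  intro hind
  obtain ⟨j, hj, t, ht, hjt⟩ :=
    Submodule.mem_sup.1 (colon_eq_sup_span_singleton_of_mem hx hf hind.left_notMem ▸ hg)
  obtain ⟨u, rfl⟩ := Ideal.mem_span_singleton'.1 ht
  have hdep : -u * f + 1 * g ∈ J := by rw [← hjt]; convert hj using 1; ring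
  exact notMem_maximalIdeal.2 isUnit_one (hind _ _ hdep).2

theorem HasTypeOne.not_hasTypeTwo {J : Ideal Q} (h : HasTypeOne J) : ¬ HasTypeTwo J := by
  rintro ⟨f, g, hfg, hind⟩
  obtain ⟨x, -, hx⟩ := h
  exact not_indepModulo_of_colon_eq hx
    (hfg ▸ Ideal.mem_sup_right (Ideal.subset_span (by simp)))
    (hfg ▸ Ideal.mem_sup_right (Ideal.subset_span (by simp))) hind

theorem not_le_of_hasTypeOne_of_hasTypeTwo_inf {I1 I2 : Ideal Q} (h1 : HasTypeOne I1)
    (h : HasTypeTwo (I1 ⊓ I2)) : ¬ I1 ≤ I2 :=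
  fun hle => h1.not_hasTypeTwo (inf_eq_left.2 hle ▸ h)

theorem SocDeg.pow_le_iff {J : Ideal Q} {σ n : ℕ} (h : SocDeg J σ) :
    maximalIdeal Q ^ n ≤ J ↔ σ < n :=
  ⟨fun hn => lt_of_not_ge fun hle => h.1 ((Ideal.pow_le_pow_right hle).trans hn),
    fun hn => (Ideal.pow_le_pow_right hn).trans h.2⟩

theorem SocDeg.unique {J : Ideal Q} {σ τ : ℕ} (h : SocDeg J σ) (h' : SocDeg J τ) :
    σ = τ := by
  have h₁ := h'.pow_le_iff.1 (h.pow_le_iff.2 (Nat.lt_succ_self σ))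
  have h₂ := h.pow_le_iff.1 (h'.pow_le_iff.2 (Nat.lt_succ_self τ))
  omega

theorem SocDeg.inf {I1 I2 : Ideal Q} {s1 s2 : ℕ} (h1 : SocDeg I1 s1) (h2 : SocDeg I2 s2) :
    SocDeg (I1 ⊓ I2) (max s1 s2) := by
  simp only [SocDeg, le_inf_iff, h1.pow_le_iff, h2.pow_le_iff]
  omega

theorem two_le_of_socDeg_inf {I1 I2 : Ideal Q} {s : ℕ} (h1q2 : I1 ≤ maximalIdeal Q ^ 2)
    (h1 : HasTypeOne I1) (h : HasTypeTwo (I1 ⊓ I2)) (hs : SocDeg (I1 ⊓ I2) s) : 2 ≤ s := by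
  by_contra hlt
  exact not_le_of_hasTypeOne_of_hasTypeTwo_inf h1 h
    (h1q2.trans ((hs.pow_le_iff.2 (by omega)).trans inf_le_right))

theorem indepModulo_inf {I1 I2 : Ideal Q} {f g : Q} (hf2 : f ∈ I2) (hf1 : f ∉ I1)
    (hg2 : g ∉ I2) (hg1 : g ∈ I1.colon (maximalIdeal Q)) : IndepModulo (I1 ⊓ I2) f g := by
  intro a c h
  have hc : c ∈ maximalIdeal Q := by
    by_contra hc
    refine hg2 ((Ideal.unit_mul_mem_iff_mem I2 (notMem_maximalIdeal.1 hc)).1 ?_)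
    simpa using I2.sub_mem h.2 (I2.mul_mem_left a hf2)
  refine ⟨by_contra fun ha =>
    hf1 ((Ideal.unit_mul_mem_iff_mem I1 (notMem_maximalIdeal.1 ha)).1 ?_), hc⟩
  simpa using I1.sub_mem h.1 (mul_mem_of_mem_colon_maximalIdeal hg1 hc)

theorem pow_le_inf_sup_span_pair {I1 I2 : Ideal Q} {s : ℕ} {f g : Q} (h1 : HasTypeOne I1)
    (h2 : HasTypeOne I2) (hpow : maximalIdeal Q ^ (s + 1) ≤ I1 ⊓ I2)
    (hf : f ∈ maximalIdeal Q ^ s ⊓ I2) (hf1 : f ∉ I1) (hg : g ∈ maximalIdeal Q ^ s)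
    (hg2 : g ∉ I2) : maximalIdeal Q ^ s ≤ I1 ⊓ I2 ⊔ Ideal.span {f, g} := by
  obtain ⟨x1, -, hx1⟩ := h1
  obtain ⟨x2, -, hx2⟩ := h2
  have hcol1 := pow_le_colon_maximalIdeal (hpow.trans inf_le_left)
  have hcol2 := pow_le_colon_maximalIdeal (hpow.trans inf_le_right)
  have hsoc1 := colon_eq_sup_span_singleton_of_mem hx1 (hcol1 hf.1) hf1
  have hsoc2 := colon_eq_sup_span_singleton_of_mem hx2 (hcol2 hg) hg2
  intro z hz
  obtain ⟨z2, hz2, t, ht, rfl⟩ := Submodule.mem_sup.1 (hsoc2 ▸ hcol2 hz)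
  obtain ⟨u, rfl⟩ := Ideal.mem_span_singleton'.1 ht
  have hz2s : z2 ∈ maximalIdeal Q ^ s := by
    simpa using Ideal.sub_mem _ hz (Ideal.mul_mem_left _ u hg)
  obtain ⟨z1, hz1, t', ht', rfl⟩ := Submodule.mem_sup.1 (hsoc1 ▸ hcol1 hz2s)
  obtain ⟨v, rfl⟩ := Ideal.mem_span_singleton'.1 ht'
  have hz1' : z1 ∈ I2 := by simpa using I2.sub_mem hz2 (I2.mul_mem_left v hf.2)
  rw [add_assoc]
  exact add_mem (Ideal.mem_sup_left ⟨hz1, hz1'⟩)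
    (Ideal.mem_sup_right (Ideal.mem_span_pair.2 ⟨v, u, rfl⟩))

theorem exists_indepModulo_spanning_iff {I1 I2 : Ideal Q} {s : ℕ} (h1 : HasTypeOne I1)
    (h2 : HasTypeOne I2) (hpow : maximalIdeal Q ^ (s + 1) ≤ I1 ⊓ I2)
    (hs2 : ¬ maximalIdeal Q ^ s ≤ I2) :
    (∃ f g : Q, maximalIdeal Q ^ s ⊔ (I1 ⊓ I2) = (I1 ⊓ I2) ⊔ Ideal.span {f, g} ∧
      IndepModulo (I1 ⊓ I2) f g) ↔ ¬ maximalIdeal Q ^ s ⊓ I2 ≤ I1 := by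
  constructor
  · rintro ⟨f, g, hspan, hind⟩ hcap
    obtain ⟨x2, -, hx2⟩ := h2
    have hcol : maximalIdeal Q ^ s ⊔ I1 ⊓ I2 ≤ I2.colon (maximalIdeal Q) :=
      sup_le (pow_le_colon_maximalIdeal (hpow.trans inf_le_right))
        (inf_le_right.trans Ideal.le_colon)
    have hmod : (maximalIdeal Q ^ s ⊔ I1 ⊓ I2) ⊓ I2 ≤ I1 ⊓ I2 := by
      rw [sup_comm, sup_inf_assoc_of_le _ inf_le_right]
      exact sup_le le_rfl (le_inf hcap inf_le_right)
    have hf : f ∈ maximalIdeal Q ^ s ⊔ I1 ⊓ I2 :=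
      hspan ▸ Ideal.mem_sup_right (Ideal.subset_span (by simp))
    have hg : g ∈ maximalIdeal Q ^ s ⊔ I1 ⊓ I2 :=
      hspan ▸ Ideal.mem_sup_right (Ideal.subset_span (by simp))
    refine not_indepModulo_of_colon_eq hx2 (hcol hf) (hcol hg)
      fun a c h => hind a c (hmod ⟨?_, h⟩)
    exact add_mem (Ideal.mul_mem_left _ a hf) (Ideal.mul_mem_left _ c hg)
  · intro hcap
    obtain ⟨f, hf, hf1⟩ := SetLike.not_le_iff_exists.1 hcap
    obtain ⟨g, hg, hg2⟩ := SetLike.not_le_iff_exists.1 hs2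
    refine ⟨f, g, le_antisymm ?_ ?_, indepModulo_inf hf.2 hf1 hg2
      (pow_le_colon_maximalIdeal (hpow.trans inf_le_left) hg)⟩
    · exact sup_le (pow_le_inf_sup_span_pair h1 h2 hpow hf hf1 hg hg2) le_sup_left
    · refine sup_le le_sup_right (Ideal.span_le.2 ?_)
      exact Set.insert_subset_iff.2
        ⟨Ideal.mem_sup_left hf.1, Set.singleton_subset_iff.2 (Ideal.mem_sup_left hg)⟩

end

theorem Nat.sInf_setOf_one_le_and_eq_iff {P : ℕ → Prop} (hP : Monotone P) {s : ℕ}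
    (hs : 2 ≤ s) (hPs : P (s + 1)) : sInf {i : ℕ | 1 ≤ i ∧ P (i + 1)} = s ↔ ¬ P s := by
  have hmem : s ∈ {i : ℕ | 1 ≤ i ∧ P (i + 1)} := ⟨by omega, hPs⟩
  constructor
  · intro hb hP'
    have : sInf {i : ℕ | 1 ≤ i ∧ P (i + 1)} ≤ s - 1 :=
      Nat.sInf_le ⟨by omega, by rwa [Nat.sub_add_cancel (by omega)]⟩
    omega
  · intro hnP
    have hb := Nat.sInf_mem ⟨s, hmem⟩
    exact le_antisymm (Nat.sInf_le hmem) (not_lt.1 fun hlt => hnP (hP hlt hb.2))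

theorem stmt4_general (Q : Type*) [CommRing Q] [IsLocalRing Q]
    (I1 I2 : Ideal Q)
    (h1q2 : I1 ≤ maximalIdeal Q ^ 2)
    (h1gor : HasTypeOne I1) (h2gor : HasTypeOne I2)
    (s1 s2 s b : ℕ)
    (hs1 : SocDeg I1 s1) (hs2 : SocDeg I2 s2) (hle : s1 ≤ s2)
    (htype2 : HasTypeTwo (I1 ⊓ I2))
    (hs : SocDeg (I1 ⊓ I2) s)
    (hb : b = sInf {i : ℕ | 1 ≤ i ∧ maximalIdeal Q ^ (i + 1) ⊓ I2 ≤ I1}) :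
    ((∃ x y : Q,
        maximalIdeal Q ^ s ⊔ (I1 ⊓ I2) = (I1 ⊓ I2) ⊔ Ideal.span {x, y} ∧
        ∀ a c : Q, a * x + c * y ∈ I1 ⊓ I2 →
          a ∈ maximalIdeal Q ∧ c ∈ maximalIdeal Q) ↔ b = s) ∧
    (b = s → s1 = s) := by
  have hs2s : s2 = s := by simpa [max_eq_right hle] using (hs1.inf hs2).unique hs
  have hbs : b = s ↔ ¬ maximalIdeal Q ^ s ⊓ I2 ≤ I1 := hb ▸
    Nat.sInf_setOf_one_le_and_eq_iff
      (fun _ _ hij h => (inf_le_inf_right I2 (Ideal.pow_le_pow_right hij)).trans h)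
      (two_le_of_socDeg_inf h1q2 h1gor htype2 hs) (inf_le_left.trans (hs.2.trans inf_le_left))
  refine ⟨(exists_indepModulo_spanning_iff h1gor h2gor hs.2 (hs2s ▸ hs2.1)).trans hbs.symm,
    fun hbeq => ?_⟩
  by_contra hne
  exact hbs.1 hbeq (inf_le_left.trans (hs1.pow_le_iff.2 (by omega)))

/-- In the type-2 setup with Gorenstein `R1 = Q/I1`,
`R2 = Q/I2` of socle degrees `s1 ≤ s2`, `R = Q/(I1 ∩ I2)` of type 2 and socle
degree `s`, and `b = min{ i ≥ 1 : q^{i+1} ∩ I2 ⊆ I1 }`: the rank of `m^s`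
(where `m = q/(I1 ∩ I2)`, so `m^s = (q^s + I)/I`) equals 2 iff `b = s`, and in
that case `s1 = s`. -/
theorem stmt4 (Q : Type*) [CommRing Q] [IsLocalRing Q] [IsNoetherianRing Q]
    (hreg : IsRegularLocal Q)
    (I1 I2 : Ideal Q)
    (h1p : I1.IsPrimary) (h1r : I1.radical = maximalIdeal Q)
    (h2p : I2.IsPrimary) (h2r : I2.radical = maximalIdeal Q)
    (h1q2 : I1 ≤ maximalIdeal Q ^ 2) (h2q2 : I2 ≤ maximalIdeal Q ^ 2)
    (h1gor : HasTypeOne I1) (h2gor : HasTypeOne I2)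
    (s1 s2 s b : ℕ)
    (hs1 : SocDeg I1 s1) (hs2 : SocDeg I2 s2) (hle : s1 ≤ s2)
    (htype2 : HasTypeTwo (I1 ⊓ I2))
    (hs : SocDeg (I1 ⊓ I2) s)
    (hb : b = sInf {i : ℕ | 1 ≤ i ∧ maximalIdeal Q ^ (i + 1) ⊓ I2 ≤ I1}) :
    ((∃ x y : Q,
        maximalIdeal Q ^ s ⊔ (I1 ⊓ I2) = (I1 ⊓ I2) ⊔ Ideal.span {x, y} ∧
        ∀ a c : Q, a * x + c * y ∈ I1 ⊓ I2 →
          a ∈ maximalIdeal Q ∧ c ∈ maximalIdeal Q) ↔ b = s) ∧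
    (b = s → s1 = s) :=
  stmt4_general Q I1 I2 h1q2 h1gor h2gor s1 s2 s b hs1 hs2 hle htype2 hs hb
end

section
/- With I = I1 ∩ I2 and I' = I1 + I2 for q-primary ideals I1, I2 in a regular local ring Q, the Hilbert functions satisfy h_{Q/I}(i) + h_{Q/I'}(i) = h_{Q/I1}(i) + h_{Q/I2}(i) for all i ≥ 0. -/
open MvPolynomial

/-- The ideal generated by the variables (the graded maximal ideal `q`). -/
noncomputable def qIdeal (k : Type*) [Field k] (e : ℕ) : Ideal (MvPolynomial (Fin e) k) :=
  Ideal.span (Set.range X)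

/-- The Hilbert function of `Q/J`: `h(i) = dim_k (q^i + J)/(q^{i+1} + J)`. -/
noncomputable def hilb (k : Type*) [Field k] (e : ℕ)
    (J : Ideal (MvPolynomial (Fin e) k)) (i : ℕ) : ℕ :=
  Module.finrank k
    (((qIdeal k e ^ i ⊔ J).map (Ideal.Quotient.mk (qIdeal k e ^ (i + 1) ⊔ J))).restrictScalars k)

/-- An ideal is homogeneous if it is generated by homogeneous polynomials. -/
def IsHomogeneousIdeal (k : Type*) [Field k] (e : ℕ)
    (J : Ideal (MvPolynomial (Fin e) k)) : Prop :=
  ∃ S : Set (MvPolynomial (Fin e) k),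
    (∀ p ∈ S, ∃ n, MvPolynomial.IsHomogeneous p n) ∧ J = Ideal.span S

/-! For a homogeneous ideal `J`, every class in `(q^i + J)/(q^{i+1} + J)` is represented by a
form of degree `i`, and such a form vanishes there exactly when it lies in `J`. Hence
`h_{Q/J}(i) = dim Q_i - dim J_i`, where `J_i` is the degree-`i` part of `J`. The degree-`i` parts
of `I₁ ∩ I₂` and `I₁ + I₂` are `J₁ ∩ J₂` and, by homogeneity, `J₁ + J₂`, so the identity is
Grassmann's formula `dim (J₁ + J₂) + dim (J₁ ∩ J₂) = dim J₁ + dim J₂`. -/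

attribute [local instance] MvPolynomial.gradedAlgebra

namespace MvPolynomial

section CommRing

variable {σ R : Type*} [CommRing R] {p : MvPolynomial σ R} {n : ℕ}

theorem homogeneousComponent_eq_zero_of_mem_pow_idealOfVars {d : ℕ}
    (hp : p ∈ idealOfVars σ R ^ n) (hd : d < n) : homogeneousComponent d p = 0 := by
  ext x
  rw [coeff_homogeneousComponent, coeff_zero]
  split_ifs with hx
  · exact (mem_pow_idealOfVars_iff' n p).mp hp x (hx ▸ hd)
  · rfl

theorem IsHomogeneous.mem_pow_idealOfVars (hp : p.IsHomogeneous n) :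
    p ∈ idealOfVars σ R ^ n :=
  (mem_pow_idealOfVars_iff' n p).mpr fun _ hx => hp.coeff_eq_zero hx.ne

theorem sub_homogeneousComponent_mem_pow_idealOfVars_succ (hp : p ∈ idealOfVars σ R ^ n) :
    p - homogeneousComponent n p ∈ idealOfVars σ R ^ (n + 1) := by
  refine (mem_pow_idealOfVars_iff' (n + 1) _).mpr fun x hx => ?_
  rw [coeff_sub, coeff_homogeneousComponent]
  split_ifs with hxn
  · exact sub_self _
  · rw [(mem_pow_idealOfVars_iff' n p).mp hp x (by omega), sub_zero]

theorem _root_.Ideal.IsHomogeneous.homogeneousComponent_mem {J : Ideal (MvPolynomial σ R)}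
    (hJ : J.IsHomogeneous (homogeneousSubmodule σ R)) (hp : p ∈ J) (n : ℕ) :
    homogeneousComponent n p ∈ J :=
  decomposition.decompose'_apply p n ▸ hJ n hp

noncomputable def degreePart (J : Ideal (MvPolynomial σ R)) (n : ℕ) :
    Submodule R (MvPolynomial σ R) :=
  J.restrictScalars R ⊓ homogeneousSubmodule σ R n

theorem degreePart_le (J : Ideal (MvPolynomial σ R)) (n : ℕ) :
    degreePart J n ≤ homogeneousSubmodule σ R n :=
  inf_le_right

theorem degreePart_inf (I₁ I₂ : Ideal (MvPolynomial σ R)) (n : ℕ) :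
    degreePart (I₁ ⊓ I₂) n = degreePart I₁ n ⊓ degreePart I₂ n := by
  rw [degreePart, degreePart, degreePart, Submodule.restrictScalars_inf, inf_inf_distrib_right]

theorem degreePart_sup {I₁ I₂ : Ideal (MvPolynomial σ R)}
    (h₁ : I₁.IsHomogeneous (homogeneousSubmodule σ R))
    (h₂ : I₂.IsHomogeneous (homogeneousSubmodule σ R)) (n : ℕ) :
    degreePart (I₁ ⊔ I₂) n = degreePart I₁ n ⊔ degreePart I₂ n := by
  refine le_antisymm ?_ (sup_le (inf_le_inf_right _ ?_) (inf_le_inf_right _ ?_))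
  · rintro x ⟨hx, hxn⟩
    obtain ⟨a, ha, b, hb, rfl⟩ := Submodule.mem_sup.mp hx
    have hab : homogeneousComponent n (a + b) = a + b := by
      rw [homogeneousComponent_of_mem hxn, if_pos rfl]
    rw [← hab, map_add]
    exact Submodule.add_mem_sup ⟨h₁.homogeneousComponent_mem ha n, homogeneousComponent_mem n a⟩
      ⟨h₂.homogeneousComponent_mem hb n, homogeneousComponent_mem n b⟩
  · exact Submodule.restrictScalars_mono _ le_sup_left
  · exact Submodule.restrictScalars_mono _ le_sup_right

noncomputable def homogeneousToQuotient (J : Ideal (MvPolynomial σ R)) (n : ℕ) :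
    homogeneousSubmodule σ R n →ₗ[R] MvPolynomial σ R ⧸ (idealOfVars σ R ^ (n + 1) ⊔ J) :=
  (Ideal.Quotient.mkₐ R _).toLinearMap ∘ₗ (homogeneousSubmodule σ R n).subtype

theorem range_homogeneousToQuotient {J : Ideal (MvPolynomial σ R)}
    (hJ : J.IsHomogeneous (homogeneousSubmodule σ R)) :
    LinearMap.range (homogeneousToQuotient J n) =
      ((idealOfVars σ R ^ n ⊔ J).map (Ideal.Quotient.mk _)).restrictScalars R := by
  refine le_antisymm ?_ fun y hy => ?_
  · rintro _ ⟨⟨x, hx⟩, rfl⟩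
    exact Ideal.mem_map_of_mem _ (Ideal.mem_sup_left hx.mem_pow_idealOfVars)
  obtain ⟨f, hf, rfl⟩ := (Ideal.mem_map_iff_of_surjective _ Ideal.Quotient.mk_surjective).mp hy
  obtain ⟨g, hg, b, hb, rfl⟩ := Submodule.mem_sup.mp hf
  refine ⟨⟨homogeneousComponent n (g + b), homogeneousComponent_mem n _⟩, ?_⟩
  refine Ideal.Quotient.mk_eq_mk_iff_sub_mem _ _ |>.mpr ?_
  change homogeneousComponent n (g + b) - (g + b) ∈ _
  rw [show homogeneousComponent n (g + b) - (g + b) =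
      -((g - homogeneousComponent n g) + (b - homogeneousComponent n b)) by rw [map_add]; ring]
  exact neg_mem (Submodule.add_mem_sup (sub_homogeneousComponent_mem_pow_idealOfVars_succ hg)
    (sub_mem hb (hJ.homogeneousComponent_mem hb n)))

theorem ker_homogeneousToQuotient {J : Ideal (MvPolynomial σ R)}
    (hJ : J.IsHomogeneous (homogeneousSubmodule σ R)) :
    LinearMap.ker (homogeneousToQuotient J n) =
      (degreePart J n).comap (homogeneousSubmodule σ R n).subtype := by
  ext ⟨x, hx⟩
  simp only [LinearMap.mem_ker, Submodule.mem_comap, Submodule.subtype_apply, degreePart,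
    Submodule.mem_inf, Submodule.restrictScalars_mem, hx, and_true]
  refine ⟨fun h => ?_, fun h => Ideal.Quotient.eq_zero_iff_mem.mpr (Ideal.mem_sup_right h)⟩
  have hxA : x ∈ idealOfVars σ R ^ (n + 1) ⊔ J := Ideal.Quotient.eq_zero_iff_mem.mp h
  obtain ⟨g, hg, b, hb, hgb⟩ := Submodule.mem_sup.mp hxA
  have hx' : x = homogeneousComponent n b := calc
    x = homogeneousComponent n (g + b) := by rw [hgb, homogeneousComponent_of_mem hx, if_pos rfl]
    _ = homogeneousComponent n b := by
      rw [map_add, homogeneousComponent_eq_zero_of_mem_pow_idealOfVars hg n.lt_succ_self,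
        zero_add]
  exact hx' ▸ hJ.homogeneousComponent_mem hb n

end CommRing

section Field

variable {σ k : Type*} [Field k] [Finite σ]

instance (n : ℕ) : FiniteDimensional k (homogeneousSubmodule σ k n) :=
  Submodule.finiteDimensional_of_le (S₂ := restrictTotalDegree σ k n)
    fun _ hp => (mem_restrictTotalDegree _ _ _).mpr hp.totalDegree_le

instance (J : Ideal (MvPolynomial σ k)) (n : ℕ) : FiniteDimensional k (degreePart J n) :=
  Submodule.finiteDimensional_of_le (degreePart_le J n)

end Field

end MvPolynomial

section Hilbert

variable {k : Type*} [Field k] {e : ℕ}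

theorem IsHomogeneousIdeal.isHomogeneous {J : Ideal (MvPolynomial (Fin e) k)}
    (hJ : IsHomogeneousIdeal k e J) : J.IsHomogeneous (homogeneousSubmodule (Fin e) k) := by
  obtain ⟨S, hS, rfl⟩ := hJ
  exact Ideal.homogeneous_span _ S fun p hp =>
    (hS p hp).imp fun n h => (mem_homogeneousSubmodule n p).mpr h

theorem hilb_add_finrank_degreePart {J : Ideal (MvPolynomial (Fin e) k)}
    (hJ : J.IsHomogeneous (homogeneousSubmodule (Fin e) k)) (n : ℕ) :
    hilb k e J n + Module.finrank k (degreePart J n) =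
      Module.finrank k (homogeneousSubmodule (Fin e) k n) := by
  rw [← LinearMap.finrank_range_add_finrank_ker (homogeneousToQuotient J n),
    range_homogeneousToQuotient hJ, ker_homogeneousToQuotient hJ,
    (Submodule.comapSubtypeEquivOfLe (degreePart_le J n)).finrank_eq]
  -- `qIdeal k e` unfolds to `idealOfVars (Fin e) k`
  rfl

end Hilbert

theorem stmt10_general (k : Type*) [Field k] (e : ℕ)
    (I1 I2 : Ideal (MvPolynomial (Fin e) k))
    (h1hom : IsHomogeneousIdeal k e I1) (h2hom : IsHomogeneousIdeal k e I2) :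
    ∀ i : ℕ, hilb k e (I1 ⊓ I2) i + hilb k e (I1 + I2) i =
      hilb k e I1 i + hilb k e I2 i := by
  intro i
  have h₁ := h1hom.isHomogeneous
  have h₂ := h2hom.isHomogeneous
  have hinf := hilb_add_finrank_degreePart (h₁.inf h₂) i
  have hsup := hilb_add_finrank_degreePart (h₁.sup h₂) i
  have hI₁ := hilb_add_finrank_degreePart h₁ i
  have hI₂ := hilb_add_finrank_degreePart h₂ i
  rw [degreePart_inf] at hinf
  rw [degreePart_sup h₁ h₂] at hsup
  have grassmann := Submodule.finrank_sup_add_finrank_inf_eq (degreePart I1 i) (degreePart I2 i)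
  rw [Submodule.add_eq_sup]
  omega

/-- With `I = I1 ∩ I2` and `I' = I1 + I2` for homogeneous
`q`-primary ideals `I1, I2` in the graded setting, the Hilbert functions
satisfy `h_{Q/I}(i) + h_{Q/I'}(i) = h_{Q/I1}(i) + h_{Q/I2}(i)` for all `i ≥ 0`
(Mayer–Vietoris). -/
theorem stmt10 (k : Type*) [Field k] (e : ℕ)
    (I1 I2 : Ideal (MvPolynomial (Fin e) k))
    (h1hom : IsHomogeneousIdeal k e I1) (h2hom : IsHomogeneousIdeal k e I2)
    (h1p : I1.IsPrimary) (h1r : I1.radical = qIdeal k e)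
    (h2p : I2.IsPrimary) (h2r : I2.radical = qIdeal k e) :
    ∀ i : ℕ, hilb k e (I1 ⊓ I2) i + hilb k e (I1 + I2) i =
      hilb k e I1 i + hilb k e I2 i :=
  stmt10_general k e I1 I2 h1hom h2hom
end
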